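/- arXiv:2306.05020 — 3 statements merged into one kernel-verified Lean document; each statement's English description precedes it below -/
import Mathlib

section
/- Let $G$ be a connected graph on $n$ vertices and $Q = (t, \{x_it\}_{i\in D})$ a monomial prime ideal of $R_G$ with $D \subsetneq [n]$. If $D$ contains two adjacent vertices $i,j$ of $G$, and $k \in [n]\setminus D$ is a vertex at finite distance from $i$, then a contradiction arises; consequently, if $G$ is non-bipartite and connected, the only monomial prime ideal of the form $(t, \{x_it\}_{i\in D})$ that is a minimal prime of $(t)$ and contained in $(t,x_1t,\dots,x_nt)$ is $(t,x_1t,\dots,x_nt)$ itself. -/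
open MvPolynomial

set_option synthInstance.maxHeartbeats 1000000

noncomputable section

/-- The ambient polynomial ring `K[x_i : i ∈ V][t]`, with the variable `none` playing
the role of `t`. -/
abbrev Amb (K V : Type*) [CommSemiring K] := MvPolynomial (Option V) K

variable (K : Type*) [Field K] {V : Type*} [DecidableEq V]

/-- The generator `t`. -/
def tGen : Amb K V := X none

/-- The generator `x_i t`. -/
def vGen (i : V) : Amb K V := X (some i) * X none

/-- The generator `x_i x_j t`. -/
def eGen (i j : V) : Amb K V := X (some i) * X (some j) * X none

variable (G : SimpleGraph V)

/-- The toric ring `R_G = K[t, {x_i t}, {x_i x_j t : {i,j} ∈ E(G)}]` of the graph `G`. -/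
def RG : Subalgebra K (Amb K V) :=
  Algebra.adjoin K
    ({tGen K} ∪ Set.range (vGen K (V := V)) ∪ {p | ∃ i j, G.Adj i j ∧ p = eGen K i j})

/-- The faces of the one-dimensional simplicial complex attached to `G`. -/
def IsFace (F : Finset V) : Prop :=
  F = ∅ ∨ (∃ i, F = {i}) ∨ ∃ i j, G.Adj i j ∧ F = {i, j}

/-- The monomial `x_F t`. -/
def faceMon (F : Finset V) : Amb K V := (∏ i ∈ F, X (some i)) * X none

/-- The ideal `P_0 = (t, x_1 t, …, x_n t)` of `R_G`. -/
def P0 : Ideal (RG K G) :=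
  Ideal.span {u : RG K G | ((u : Amb K V) = tGen K) ∨ ∃ i, (u : Amb K V) = vGen K i}

/-- The principal ideal `(t)` of `R_G`. -/
def tIdeal : Ideal (RG K G) := Ideal.span {u : RG K G | (u : Amb K V) = tGen K}

/-- The ideal `P_C` generated by the monomials `x_F t` for faces `F ⊆ C`. -/
def PC (C : Finset V) : Ideal (RG K G) :=
  Ideal.span {u : RG K G | ∃ F : Finset V, IsFace G F ∧ F ⊆ C ∧ (u : Amb K V) = faceMon K F}

/-- The ideal `Q_i` generated by the monomials `x_F t` for faces `F ∋ i`. -/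
def Qi (i : V) : Ideal (RG K G) :=
  Ideal.span {u : RG K G | ∃ F : Finset V, IsFace G F ∧ i ∈ F ∧ (u : Amb K V) = faceMon K F}

/-- A vertex cover of `G`. -/
def IsVertexCover (C : Finset V) : Prop := ∀ ⦃i j⦄, G.Adj i j → i ∈ C ∨ j ∈ C

/-- A minimal vertex cover of `G`. -/
def IsMinVertexCover (C : Finset V) : Prop :=
  IsVertexCover G C ∧ ∀ C' ⊆ C, IsVertexCover G C' → C' = C

/-- An induced odd cycle of `G`, given by an injective cyclic enumeration of its
vertices such that adjacency holds exactly between consecutive vertices. -/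
def IsInducedOddCycle {V : Type*} (G : SimpleGraph V) (m : ℕ) (c : ZMod m → V) : Prop :=
  3 ≤ m ∧ Odd m ∧ Function.Injective c ∧
    ∀ p q : ZMod m, G.Adj (c p) (c q) ↔ (q = p + 1 ∨ p = q + 1)

/-- The monomial `x^a t^b` of the ambient ring. -/
def monom [Fintype V] (a : V → ℕ) (b : ℕ) : Amb K V :=
  (∏ i, X (some i) ^ a i) * X none ^ b

/-- An element of `R_G` which is a monomial. -/
def IsMonomialElt [Fintype V] (u : RG K G) : Prop :=
  ∃ (a : V → ℕ) (b : ℕ), (u : Amb K V) = monom K a b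

/-- A monomial ideal of `R_G`. -/
def IsMonomialIdeal [Fintype V] (I : Ideal (RG K G)) : Prop :=
  ∃ S : Set (RG K G), (∀ u ∈ S, IsMonomialElt K G u) ∧ I = Ideal.span S

/-- A height one ideal of the domain `R_G`: a nonzero prime all of whose properly
contained primes are zero. -/
def HeightOne (I : Ideal (RG K G)) : Prop :=
  I.IsPrime ∧ I ≠ ⊥ ∧ ∀ J : Ideal (RG K G), J.IsPrime → J < I → J = ⊥

/-- The ideal contains the element `t`. -/
def ContainsT (I : Ideal (RG K G)) : Prop := ∃ u ∈ I, (u : Amb K V) = tGen K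

/-- The canonical ideal of `R_G` (for `R_G` normal): the intersection of all height one
monomial prime ideals. -/
def canonicalIdeal [Fintype V] : Ideal (RG K G) :=
  sInf {P : Ideal (RG K G) | HeightOne K G P ∧ IsMonomialIdeal K G P}

/-- `R_G` is Gorenstein: the canonical ideal (= canonical module) is isomorphic to
`R_G` as an `R_G`-module, equivalently it is a principal ideal, i.e. the canonical
class vanishes. -/
def IsGorensteinToric [Fintype V] : Prop :=
  (canonicalIdeal K G).IsPrincipal

/-- The monomial ideal `Q_D = (t, {x_i t}_{i ∈ D})` of `R_G`. -/
def QD {n : ℕ} (G : SimpleGraph (Fin n)) (D : Finset (Fin n)) : Ideal (RG K G) :=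
  Ideal.span {u : RG K G |
    (u : Amb K (Fin n)) = tGen K ∨ ∃ i ∈ D, (u : Amb K (Fin n)) = vGen K i}

set_option linter.unusedSectionVars false
set_option linter.unusedVariables false
section Stmt4Aux

open Finsupp in
lemma Stmt4.tGen_eq : tGen K (V := V) = monomial (Finsupp.single (none : Option V) 1) 1 := rfl

open Finsupp in
lemma Stmt4.vGen_eq (i : V) :
    vGen K i = monomial (Finsupp.single (some i) 1 + Finsupp.single (none : Option V) 1) 1 := by
  rw [vGen, show (X (some i) : Amb K V) = monomial (Finsupp.single (some i) 1) 1 from rfl,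
    show (X none : Amb K V) = monomial (Finsupp.single (none : Option V) 1) 1 from rfl,
    monomial_mul, one_mul]

open Finsupp in
lemma Stmt4.eGen_eq (i j : V) :
    eGen K i j = monomial
      (Finsupp.single (some i) 1 + Finsupp.single (some j) 1 +
        Finsupp.single (none : Option V) 1) 1 := by
  rw [eGen, show (X (some i) : Amb K V) = monomial (Finsupp.single (some i) 1) 1 from rfl,
    show (X (some j) : Amb K V) = monomial (Finsupp.single (some j) 1) 1 from rfl,
    show (X none : Amb K V) = monomial (Finsupp.single (none : Option V) 1) 1 from rfl,
    monomial_mul, monomial_mul, one_mul, one_mul]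

lemma Stmt4.sum_single_some [Fintype V] (a : V) (b : ℕ) :
    ∑ i : V, (Finsupp.single ((some a) : Option V) b) (some i) = b := by
  simp [Finsupp.single_apply]

lemma Stmt4.sum_single_none [Fintype V] (b : ℕ) :
    ∑ i : V, (Finsupp.single (none : Option V) b) (some i) = 0 := by
  simp [Finsupp.single_apply]

/-- Every monomial appearing in an element of `R_G` has `x`-degree at most twice its
`t`-degree. -/
lemma Stmt4.coeff_RG [Fintype V] {f : Amb K V} (hf : f ∈ RG K G) :
    ∀ μ : Option V →₀ ℕ, 2 * μ none < ∑ i : V, μ (some i) → coeff μ f = 0 := by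
  induction hf using Algebra.adjoin_induction with
  | mem x hx =>
    rcases hx with (hx | ⟨i, rfl⟩) | ⟨i, j, -, rfl⟩
    · rcases hx with rfl
      intro μ h
      rw [Stmt4.tGen_eq, coeff_monomial]
      split_ifs with he
      · rw [← he] at h
        simp [Stmt4.sum_single_none] at h
      · rfl
    · intro μ h
      rw [Stmt4.vGen_eq, coeff_monomial]
      split_ifs with he
      · rw [← he] at h
        simp [Finsupp.add_apply, Finset.sum_add_distrib, Stmt4.sum_single_some,
          Stmt4.sum_single_none, Finsupp.single_apply] at h
      · rfl
    · intro μ h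
      rw [Stmt4.eGen_eq, coeff_monomial]
      split_ifs with he
      · rw [← he] at h
        simp [Finsupp.add_apply, Finset.sum_add_distrib, Stmt4.sum_single_some,
          Stmt4.sum_single_none, Finsupp.single_apply] at h
      · rfl
  | algebraMap r =>
    intro μ h
    rw [MvPolynomial.algebraMap_eq, coeff_C]
    split_ifs with he
    · rw [← he] at h
      simp at h
    · rfl
  | add x y hx hy px py =>
    intro μ h
    rw [coeff_add, px μ h, py μ h, add_zero]
  | mul x y hx hy px py =>
    intro μ h
    rw [coeff_mul]
    apply Finset.sum_eq_zero
    rintro ⟨μ1, μ2⟩ hmem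
    have h12 : μ1 + μ2 = μ := Finset.HasAntidiagonal.mem_antidiagonal.mp hmem
    rw [← h12] at h
    have hs : (∑ i : V, (μ1 + μ2) (some i)) = (∑ i : V, μ1 (some i)) + ∑ i : V, μ2 (some i) := by
      simp [Finsupp.add_apply, Finset.sum_add_distrib]
    have hn : (μ1 + μ2) none = μ1 none + μ2 none := rfl
    rw [hs, hn] at h
    rcases (by omega : 2 * μ1 none < ∑ i : V, μ1 (some i) ∨
        2 * μ2 none < ∑ i : V, μ2 (some i)) with h' | h'
    · rw [px _ h', zero_mul]
    · rw [py _ h', mul_zero]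

end Stmt4Aux
section Stmt4Aux2

variable {n : ℕ}

lemma Stmt4.tGen_mem (G : SimpleGraph V) : tGen K ∈ RG K G :=
  Algebra.subset_adjoin (Or.inl (Or.inl rfl))

lemma Stmt4.vGen_mem (G : SimpleGraph V) (i : V) : vGen K i ∈ RG K G :=
  Algebra.subset_adjoin (Or.inl (Or.inr ⟨i, rfl⟩))

lemma Stmt4.eGen_mem {G : SimpleGraph V} {i j : V} (h : G.Adj i j) : eGen K i j ∈ RG K G :=
  Algebra.subset_adjoin (Or.inr ⟨i, j, h, rfl⟩)

lemma Stmt4.tGen_mem_QD (G : SimpleGraph (Fin n)) (D : Finset (Fin n)) :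
    (⟨tGen K, Stmt4.tGen_mem K G⟩ : RG K G) ∈ QD K G D :=
  Ideal.subset_span (Or.inl rfl)

lemma Stmt4.vGen_mem_QD (G : SimpleGraph (Fin n)) {D : Finset (Fin n)} {k : Fin n}
    (hk : k ∈ D) : (⟨vGen K k, Stmt4.vGen_mem K G k⟩ : RG K G) ∈ QD K G D :=
  Ideal.subset_span (Or.inr ⟨k, hk, rfl⟩)

lemma Stmt4.QD_coeff (G : SimpleGraph (Fin n)) (D : Finset (Fin n))
    (μ : Option (Fin n) →₀ ℕ)
    (ht : ∀ r : RG K G, coeff μ ((r : Amb K (Fin n)) * tGen K) = 0)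
    (hv : ∀ d ∈ D, ∀ r : RG K G, coeff μ ((r : Amb K (Fin n)) * vGen K d) = 0)
    {u : RG K G} (hu : u ∈ QD K G D) : coeff μ (u : Amb K (Fin n)) = 0 := by
  have hu' : u ∈ Ideal.span {u : RG K G |
      (u : Amb K (Fin n)) = tGen K ∨ ∃ i ∈ D, (u : Amb K (Fin n)) = vGen K i} := hu
  have key : ∀ r : RG K G, coeff μ ((r : Amb K (Fin n)) * (u : Amb K (Fin n))) = 0 := by
    refine Submodule.span_induction (R := RG K G) (M := RG K G)
      (p := fun x _ => ∀ r : RG K G, coeff μ ((r : Amb K (Fin n)) * (x : Amb K (Fin n))) = 0)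
      ?_ ?_ ?_ ?_ hu'
    · rintro x (hx | ⟨d, hd, hx⟩) r
      · rw [hx]; exact ht r
      · rw [hx]; exact hv d hd r
    · intro r
      simp
    · intro x y hx hy px py r
      rw [Subalgebra.coe_add, mul_add, coeff_add, px r, py r, add_zero]
    · intro a x hx px r
      rw [smul_eq_mul, Subalgebra.coe_mul, ← mul_assoc, ← Subalgebra.coe_mul]
      exact px (r * a)
  have h1 := key 1
  rwa [Subalgebra.coe_one, one_mul] at h1

/-- No element of `Q_D` equals `x_i x_j t`. -/
lemma Stmt4.not_eGen_mem {G : SimpleGraph (Fin n)} {D : Finset (Fin n)} (i j : Fin n)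
    {u : RG K G} (hu : u ∈ QD K G D) : (u : Amb K (Fin n)) ≠ eGen K i j := by
  set μ : Option (Fin n) →₀ ℕ := Finsupp.single (some i) 1 + Finsupp.single (some j) 1 +
    Finsupp.single (none : Option (Fin n)) 1 with hμdef
  have hμnone : μ none = 1 := by simp [hμdef, Finsupp.add_apply, Finsupp.single_apply]
  have hμsum : ∑ a : Fin n, μ (some a) = 2 := by
    simp [hμdef, Finsupp.add_apply, Finset.sum_add_distrib, Stmt4.sum_single_some,
      Stmt4.sum_single_none, Finsupp.single_apply]
  have hcoeff : coeff μ (u : Amb K (Fin n)) = 0 := by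
    apply Stmt4.QD_coeff K G D μ ?_ ?_ hu
    · intro r
      rw [Stmt4.tGen_eq, coeff_mul_monomial']
      split_ifs with hle
      · rw [mul_one]
        apply Stmt4.coeff_RG K G r.2
        have hle' := Finsupp.le_def.mp hle
        simp only [Finsupp.tsub_apply]
        rw [Finset.sum_tsub_distrib _ (fun a _ => hle' (some a)), hμsum, hμnone,
          Stmt4.sum_single_none]
        simp [Finsupp.single_apply]
      · rfl
    · intro d hd r
      rw [Stmt4.vGen_eq, coeff_mul_monomial']
      split_ifs with hle
      · rw [mul_one]
        apply Stmt4.coeff_RG K G r.2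
        have hle' := Finsupp.le_def.mp hle
        simp only [Finsupp.tsub_apply]
        rw [Finset.sum_tsub_distrib _ (fun a _ => hle' (some a)), hμsum, hμnone]
        simp [Finsupp.add_apply, Finset.sum_add_distrib, Stmt4.sum_single_some,
          Stmt4.sum_single_none, Finsupp.single_apply]
      · rfl
  intro he
  rw [he, Stmt4.eGen_eq, coeff_monomial, if_pos rfl] at hcoeff
  exact one_ne_zero hcoeff

/-- No element of `Q_D` equals `x_k t` for `k ∉ D`. -/
lemma Stmt4.not_vGen_mem {G : SimpleGraph (Fin n)} {D : Finset (Fin n)} {k : Fin n}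
    (hk : k ∉ D) {u : RG K G} (hu : u ∈ QD K G D) : (u : Amb K (Fin n)) ≠ vGen K k := by
  set μ : Option (Fin n) →₀ ℕ := Finsupp.single (some k) 1 +
    Finsupp.single (none : Option (Fin n)) 1 with hμdef
  have hμnone : μ none = 1 := by simp [hμdef, Finsupp.add_apply, Finsupp.single_apply]
  have hμsum : ∑ a : Fin n, μ (some a) = 1 := by
    simp [hμdef, Finsupp.add_apply, Finset.sum_add_distrib, Stmt4.sum_single_some,
      Stmt4.sum_single_none, Finsupp.single_apply]
  have hcoeff : coeff μ (u : Amb K (Fin n)) = 0 := by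
    apply Stmt4.QD_coeff K G D μ ?_ ?_ hu
    · intro r
      rw [Stmt4.tGen_eq, coeff_mul_monomial']
      split_ifs with hle
      · rw [mul_one]
        apply Stmt4.coeff_RG K G r.2
        have hle' := Finsupp.le_def.mp hle
        simp only [Finsupp.tsub_apply]
        rw [Finset.sum_tsub_distrib _ (fun a _ => hle' (some a)), hμsum, hμnone,
          Stmt4.sum_single_none]
        simp [Finsupp.single_apply]
      · rfl
    · intro d hd r
      have hdk : d ≠ k := fun h => hk (h ▸ hd)
      rw [Stmt4.vGen_eq, coeff_mul_monomial', if_neg]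
      intro hle
      have h1 := Finsupp.le_def.mp hle (some d)
      simp [hμdef, Finsupp.add_apply, Finsupp.single_apply, hdk.symm] at h1
  intro he
  rw [he, Stmt4.vGen_eq, coeff_monomial, if_pos rfl] at hcoeff
  exact one_ne_zero hcoeff

end Stmt4Aux2
section Stmt4Aux3

variable {n : ℕ}

/-- The key primality obstruction: if `i, j ∈ D` are adjacent and `k ∉ D` is adjacent
to `i`, then `(x_i x_j t)(x_k t) = (x_j t)(x_i x_k t) ∈ Q_D`, while neither
`x_i x_j t` nor `x_k t` lies in `Q_D`. -/
lemma Stmt4.key {G : SimpleGraph (Fin n)} {D : Finset (Fin n)} (hP : (QD K G D).IsPrime)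
    {i j k : Fin n} (hi : i ∈ D) (hj : j ∈ D) (hij : G.Adj i j) (hik : G.Adj i k)
    (hk : k ∉ D) : False := by
  have hmul : (⟨eGen K i j, Stmt4.eGen_mem K hij⟩ : RG K G) * ⟨vGen K k, Stmt4.vGen_mem K G k⟩
      = ⟨vGen K j, Stmt4.vGen_mem K G j⟩ * ⟨eGen K i k, Stmt4.eGen_mem K hik⟩ := by
    apply Subtype.ext
    rw [Subalgebra.coe_mul, Subalgebra.coe_mul]
    show eGen K i j * vGen K k = vGen K j * eGen K i k
    simp only [eGen, vGen]
    ring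
  have hmem : (⟨eGen K i j, Stmt4.eGen_mem K hij⟩ : RG K G) *
      ⟨vGen K k, Stmt4.vGen_mem K G k⟩ ∈ QD K G D := by
    rw [hmul]
    exact Ideal.mul_mem_right _ _ (Stmt4.vGen_mem_QD K G hj)
  rcases hP.mem_or_mem hmem with h | h
  · exact Stmt4.not_eGen_mem K i j h rfl
  · exact Stmt4.not_vGen_mem K hk h rfl

/-- Propagation along walks: if the start of a walk lies in `D` together with one of its
neighbours, then the end of the walk lies in `D`. -/
lemma Stmt4.walk_in_D {G : SimpleGraph (Fin n)} {D : Finset (Fin n)}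
    (hP : (QD K G D).IsPrime) :
    ∀ {a b : Fin n} (_ : G.Walk a b), a ∈ D → (∃ u ∈ D, G.Adj a u) → b ∈ D := by
  intro a b w
  induction w with
  | nil => exact fun h _ => h
  | @cons a c b h p ih =>
    rintro ha ⟨u, hu, hau⟩
    by_cases hc : c ∈ D
    · exact ih hc ⟨a, ha, h.symm⟩
    · exact (Stmt4.key K hP ha hu hau h hc).elim

/-- If `Q_D` is prime then `D` is a vertex cover: `(x_a x_c t) t = (x_a t)(x_c t)`. -/
lemma Stmt4.cover {G : SimpleGraph (Fin n)} {D : Finset (Fin n)}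
    (hP : (QD K G D).IsPrime) {a c : Fin n} (hac : G.Adj a c) : a ∈ D ∨ c ∈ D := by
  have hmul : (⟨tGen K, Stmt4.tGen_mem K G⟩ : RG K G) * ⟨eGen K a c, Stmt4.eGen_mem K hac⟩
      = ⟨vGen K a, Stmt4.vGen_mem K G a⟩ * ⟨vGen K c, Stmt4.vGen_mem K G c⟩ := by
    apply Subtype.ext
    rw [Subalgebra.coe_mul, Subalgebra.coe_mul]
    show tGen K * eGen K a c = vGen K a * vGen K c
    simp only [tGen, eGen, vGen]
    ring
  have hmem : (⟨vGen K a, Stmt4.vGen_mem K G a⟩ : RG K G) *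
      ⟨vGen K c, Stmt4.vGen_mem K G c⟩ ∈ QD K G D := by
    rw [← hmul]
    exact Ideal.mul_mem_right _ _ (Stmt4.tGen_mem_QD K G D)
  rcases hP.mem_or_mem hmem with h | h
  · left; by_contra ha; exact Stmt4.not_vGen_mem K ha h rfl
  · right; by_contra hc; exact Stmt4.not_vGen_mem K hc h rfl

end Stmt4Aux3
/-- Let `G` be a connected graph on `[n]`.  (1) If `D ⊊ [n]` is such
that `Q_D = (t, {x_i t}_{i ∈ D})` is a prime ideal, `D` contains two adjacent vertices
`i, j`, and `k ∉ D` is at finite distance from `i`, then a contradiction arises.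
(2) Consequently, if `G` is non-bipartite, the only prime of the form `Q_D` that is a
minimal prime of `(t)` and is contained in `P₀ = (t, x₁t, …, xₙt)` is `P₀` itself. -/
theorem stmt4 (K : Type*) [Field K] {n : ℕ} (G : SimpleGraph (Fin n))
    (hconn : G.Connected) :
    (∀ D : Finset (Fin n), D ⊂ Finset.univ → (QD K G D).IsPrime →
      ∀ i j k, i ∈ D → j ∈ D → G.Adj i j → k ∉ D → G.Reachable k i → False) ∧
    (¬ G.Colorable 2 →
      ∀ D : Finset (Fin n), (QD K G D).IsPrime →
        QD K G D ∈ (tIdeal K G).minimalPrimes → QD K G D ≤ P0 K G →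
          QD K G D = P0 K G) := by
  constructor
  · intro D _ hP i j k hi hj hij hk hreach
    exact hk (hreach.symm.elim fun w => Stmt4.walk_in_D K hP w hi ⟨j, hj, hij⟩)
  · intro hbip D hP _ _
    have hedge : ∃ i ∈ D, ∃ j ∈ D, G.Adj i j := by
      by_contra hcon
      push_neg at hcon
      apply hbip
      refine ⟨SimpleGraph.Coloring.mk (fun v => if v ∈ D then 0 else 1) ?_⟩
      intro v w hvw
      by_cases hv : v ∈ D <;> by_cases hw : w ∈ D
      · exact absurd hvw (hcon v hv w hw)
      · simp [hv, hw]
      · simp [hv, hw]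
      · rcases Stmt4.cover K hP hvw with h | h
        · exact absurd h hv
        · exact absurd h hw
    obtain ⟨i, hi, j, hj, hij⟩ := hedge
    have hD : D = Finset.univ := by
      by_contra hne
      have hex : ∃ k, k ∉ D := by
        by_contra hall
        push_neg at hall
        exact hne (Finset.eq_univ_iff_forall.mpr hall)
      obtain ⟨k, hk⟩ := hex
      exact hk ((hconn.preconnected i k).elim fun w => Stmt4.walk_in_D K hP w hi ⟨j, hj, hij⟩)
    subst hD
    unfold QD P0
    congr 1
    ext u
    simp
end
end

section
/- Let $G$ be a connected graph on $n$ vertices. If the ideal $P_0 = (t, x_1t,\dots,x_nt)$ of $R_G$ is not a minimal prime of the principal ideal $(t)$, then $G$ is bipartite. -/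
open MvPolynomial

set_option synthInstance.maxHeartbeats 1000000

noncomputable section

variable (K : Type*) [Field K] {V : Type*} [DecidableEq V]

variable (G : SimpleGraph V)

/-!
Give `t` weight `2` and each `x_i` weight `-1`. The generators `t`, `x_i t`, `x_i x_j t` of `R_G`
then have weights `2`, `1`, `0`, so every element of `R_G` has only monomials of nonnegative
weight, and on such polynomials the weight-zero component is multiplicative. Its kernel on `R_G`
is `P₀`, which is therefore prime.

If `G` is connected and not bipartite, every vertex `i` lies on an odd closed walk
`i = w₀, w₁, …, w_{2k+1} = i`. With `s` the product of the edge monomials `x_{w_l} x_{w_{l+1}} t`,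
`s (x_i t)² = t (e₀ e₂ ⋯ e_{2k})²`, and `s ∉ P₀` as it has weight zero. Hence a prime `Q` with
`t ∈ Q ⊆ P₀` contains every `x_i t`, so `Q = P₀` and `P₀` is a minimal prime of `(t)`.
-/

namespace MvPolynomial

variable {R σ M : Type*} [CommSemiring R] [AddCommMonoid M] [PartialOrder M]
  [IsOrderedAddMonoid M] (w : σ → M)

def nonnegWeightSubalgebra : Subalgebra R (MvPolynomial σ R) where
  carrier := {f | ∀ d ∈ f.support, 0 ≤ Finsupp.weight w d}
  mul_mem' {f g} hf hg d hd := by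
    classical
    obtain ⟨a, ha, b, hb, rfl⟩ := Finset.mem_add.mp (support_mul f g hd)
    rw [map_add]
    exact add_nonneg (hf a ha) (hg b hb)
  add_mem' {f g} hf hg d hd := by
    classical
    rcases Finset.mem_union.mp (support_add hd) with h | h
    exacts [hf d h, hg d h]
  algebraMap_mem' r _ hd := (isWeightedHomogeneous_C w r (mem_support_iff.mp hd)).ge

variable {w}

lemma IsWeightedHomogeneous.mem_nonnegWeightSubalgebra {f : MvPolynomial σ R} {m : M}
    (hf : f.IsWeightedHomogeneous w m) (hm : 0 ≤ m) : f ∈ nonnegWeightSubalgebra w :=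
  fun _ hd => (hf (mem_support_iff.mp hd)).symm ▸ hm

lemma weightedHomogeneousComponent_zero_mul {f g : MvPolynomial σ R}
    (hf : f ∈ nonnegWeightSubalgebra w) (hg : g ∈ nonnegWeightSubalgebra w) :
    weightedHomogeneousComponent w 0 (f * g) =
      weightedHomogeneousComponent w 0 f * weightedHomogeneousComponent w 0 g := by
  classical
  ext d
  simp only [coeff_weightedHomogeneousComponent, coeff_mul]
  split_ifs with hd
  · refine Finset.sum_congr rfl fun p hp => ?_
    rw [Finset.HasAntidiagonal.mem_antidiagonal] at hp
    by_cases h0 : coeff p.1 f * coeff p.2 g = 0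
    · split_ifs <;> simp [h0]
    have hw : Finsupp.weight w p.1 = 0 ∧ Finsupp.weight w p.2 = 0 :=
      (add_eq_zero_iff_of_nonneg (hf _ (mem_support_iff.mpr (left_ne_zero_of_mul h0)))
        (hg _ (mem_support_iff.mpr (right_ne_zero_of_mul h0)))).mp (by rw [← map_add, hp, hd])
    rw [if_pos hw.1, if_pos hw.2]
  · refine (Finset.sum_eq_zero fun p hp => ?_).symm
    rw [Finset.HasAntidiagonal.mem_antidiagonal] at hp
    split_ifs with h1 h2
    · exact absurd (by rw [← hp, map_add, h1, h2, add_zero]) hd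
    all_goals simp only [mul_zero, zero_mul]

variable (w) in
def weightZeroRingHom : nonnegWeightSubalgebra (R := R) w →+* MvPolynomial σ R where
  toFun f := weightedHomogeneousComponent w 0 f
  map_one' := (isWeightedHomogeneous_one R w).weightedHomogeneousComponent_same
  map_mul' f g := weightedHomogeneousComponent_zero_mul f.2 g.2
  map_zero' := map_zero _
  map_add' _ _ := map_add _ _ _

end MvPolynomial

lemma Finset.prod_range_two_mul {M : Type*} [CommMonoid M] (f : ℕ → M) (n : ℕ) :
    ∏ l ∈ range (2 * n), f l = ∏ j ∈ range n, f (2 * j) * f (2 * j + 1) := by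
  induction n with
  | zero => simp
  | succ n ih =>
    rw [show 2 * (n + 1) = 2 * n + 1 + 1 by ring, prod_range_succ, prod_range_succ, ih,
      prod_range_succ, mul_assoc]

open Finset in
/-- The even-indexed edges `f (2j) f (2j+1)` of the cycle cover each vertex once and `f 0`
twice. -/
lemma prod_range_odd_cycle_mul_sq {M : Type*} [CommSemiring M] (f : ℕ → M) (T : M) (k : ℕ)
    (hf : f (2 * k + 1) = f 0) :
    (∏ l ∈ range (2 * k + 1), f l * f (l + 1) * T) * (f 0 * T) ^ 2 =
      T * (∏ j ∈ range (k + 1), f (2 * j) * f (2 * j + 1) * T) ^ 2 := by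
  obtain ⟨P, hP⟩ : ∃ P, ∏ l ∈ range (2 * k + 1), f l = P := ⟨_, rfl⟩
  have hshift : (∏ l ∈ range (2 * k + 1), f (l + 1)) * f 0 = P * f 0 := by
    rw [← prod_range_succ', prod_range_succ, hf, hP]
  have heven : ∏ j ∈ range (k + 1), f (2 * j) * f (2 * j + 1) = P * f 0 := by
    rw [← prod_range_two_mul, show 2 * (k + 1) = 2 * k + 1 + 1 by ring, prod_range_succ, hf, hP]
  calc (∏ l ∈ range (2 * k + 1), f l * f (l + 1) * T) * (f 0 * T) ^ 2
      = P * ((∏ l ∈ range (2 * k + 1), f (l + 1)) * f 0) * f 0 * T ^ (2 * k + 3) := by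
        rw [prod_mul_distrib, prod_mul_distrib, prod_const, card_range, hP]; ring
    _ = T * (P * f 0 * T ^ (k + 1)) ^ 2 := by rw [hshift]; ring
    _ = _ := by rw [prod_mul_distrib, heven, prod_const, card_range]

lemma SimpleGraph.Connected.exists_odd_loop {V : Type*} {G : SimpleGraph V}
    (hconn : G.Connected) (hG : ¬ G.Colorable 2) (i : V) :
    ∃ p : G.Walk i i, Odd p.length := by
  obtain ⟨u, c, k, hk⟩ : ∃ u, ∃ c : G.Walk u u, Odd c.length := by
    simpa [two_colorable_iff_forall_loop_even] using hG
  obtain ⟨p⟩ := hconn.preconnected i u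
  exact ⟨p.append (c.append p.reverse), p.length + k, by
    simp only [Walk.length_append, Walk.length_reverse]; omega⟩

section ToricRing

variable {K : Type*} [Field K] {V : Type*} {G : SimpleGraph V}

variable (V) in
def tWeight : Option V → ℤ
  | none => 2
  | some _ => -1

lemma isWeightedHomogeneous_tGen : (tGen K (V := V)).IsWeightedHomogeneous (tWeight V) 2 :=
  isWeightedHomogeneous_X K _ none

lemma isWeightedHomogeneous_vGen (i : V) : (vGen K i).IsWeightedHomogeneous (tWeight V) 1 :=
  (isWeightedHomogeneous_X K _ (some i)).mul (isWeightedHomogeneous_X K _ none)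

lemma isWeightedHomogeneous_eGen (i j : V) :
    (eGen K i j).IsWeightedHomogeneous (tWeight V) 0 :=
  ((isWeightedHomogeneous_X K _ (some i)).mul (isWeightedHomogeneous_X K _ (some j))).mul
    (isWeightedHomogeneous_X K _ none)

lemma tGen_mem_RG : tGen K ∈ RG K G :=
  Algebra.subset_adjoin (Or.inl (Or.inl rfl))

lemma vGen_mem_RG (i : V) : vGen K i ∈ RG K G :=
  Algebra.subset_adjoin (Or.inl (Or.inr ⟨i, rfl⟩))

lemma eGen_mem_RG {i j : V} (h : G.Adj i j) : eGen K i j ∈ RG K G :=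
  Algebra.subset_adjoin (Or.inr ⟨i, j, h, rfl⟩)

lemma RG_le_nonnegWeightSubalgebra : RG K G ≤ nonnegWeightSubalgebra (tWeight V) := by
  refine Algebra.adjoin_le ?_
  rintro _ ((rfl | ⟨i, rfl⟩) | ⟨i, j, -, rfl⟩)
  · exact isWeightedHomogeneous_tGen.mem_nonnegWeightSubalgebra (by norm_num)
  · exact (isWeightedHomogeneous_vGen i).mem_nonnegWeightSubalgebra (by norm_num)
  · exact (isWeightedHomogeneous_eGen i j).mem_nonnegWeightSubalgebra le_rfl

variable (K G) in
def weightZeroRG : RG K G →+* Amb K V :=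
  (weightZeroRingHom (tWeight V)).comp
    (Subalgebra.inclusion RG_le_nonnegWeightSubalgebra).toRingHom

lemma weightZeroRG_apply (u : RG K G) :
    weightZeroRG K G u = weightedHomogeneousComponent (tWeight V) 0 (u : Amb K V) := rfl

lemma P0_le_ker_weightZeroRG : P0 K G ≤ RingHom.ker (weightZeroRG K G) := by
  refine Ideal.span_le.mpr ?_
  rintro u (hu | ⟨i, hu⟩) <;> rw [SetLike.mem_coe, RingHom.mem_ker, weightZeroRG_apply, hu]
  · exact isWeightedHomogeneous_tGen.weightedHomogeneousComponent_ne 0 (by norm_num)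
  · exact (isWeightedHomogeneous_vGen i).weightedHomogeneousComponent_ne 0 (by norm_num)

lemma exists_isWeightedHomogeneous_zero_sub_mem_P0 (u : RG K G) :
    ∃ b : RG K G, (b : Amb K V).IsWeightedHomogeneous (tWeight V) 0 ∧ u - b ∈ P0 K G := by
  obtain ⟨f, hf⟩ := u
  induction hf using Algebra.adjoin_induction with
  | mem f hf =>
    rcases hf with (rfl | ⟨i, rfl⟩) | ⟨i, j, hij, rfl⟩
    · exact ⟨0, isWeightedHomogeneous_zero _ _ _, by
        rw [sub_zero]; exact Ideal.subset_span (Or.inl rfl)⟩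
    · exact ⟨0, isWeightedHomogeneous_zero _ _ _, by
        rw [sub_zero]; exact Ideal.subset_span (Or.inr ⟨i, rfl⟩)⟩
    · exact ⟨⟨_, eGen_mem_RG hij⟩, isWeightedHomogeneous_eGen i j, by
        rw [sub_self]; exact zero_mem _⟩
  | algebraMap r =>
    exact ⟨algebraMap K _ r, isWeightedHomogeneous_C _ r, by
      convert zero_mem (P0 K G); exact sub_eq_zero_of_eq rfl⟩
  | add f g hf hg ihf ihg =>
    obtain ⟨b, hb, hfb⟩ := ihf
    obtain ⟨c, hc, hgc⟩ := ihg
    refine ⟨b + c, hb.add hc, ?_⟩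
    have hfg : (⟨f + g, add_mem hf hg⟩ : RG K G) = ⟨f, hf⟩ + ⟨g, hg⟩ := rfl
    rw [hfg, add_sub_add_comm]
    exact add_mem hfb hgc
  | mul f g hf hg ihf ihg =>
    obtain ⟨b, hb, hfb⟩ := ihf
    obtain ⟨c, hc, hgc⟩ := ihg
    refine ⟨b * c, by simpa using hb.mul hc, ?_⟩
    have hfg : (⟨f * g, mul_mem hf hg⟩ : RG K G) - b * c =
        ⟨f, hf⟩ * (⟨g, hg⟩ - c) + (⟨f, hf⟩ - b) * c := by
      rw [show (⟨f * g, mul_mem hf hg⟩ : RG K G) = ⟨f, hf⟩ * ⟨g, hg⟩ from rfl]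
      ring
    rw [hfg]
    exact add_mem (Ideal.mul_mem_left _ _ hgc) (Ideal.mul_mem_right _ _ hfb)

lemma P0_eq_ker_weightZeroRG : P0 K G = RingHom.ker (weightZeroRG K G) := by
  refine le_antisymm P0_le_ker_weightZeroRG fun u hu => ?_
  obtain ⟨b, hb, hub⟩ := exists_isWeightedHomogeneous_zero_sub_mem_P0 u
  have hb0 : b = 0 := by
    have h := map_sub (weightZeroRG K G) u b
    rw [RingHom.mem_ker.mp hu, RingHom.mem_ker.mp (P0_le_ker_weightZeroRG hub),
      weightZeroRG_apply b, hb.weightedHomogeneousComponent_same, zero_sub, zero_eq_neg] at h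
    exact Subtype.ext h
  simpa [hb0] using hub

lemma P0_isPrime : (P0 K G).IsPrime := by
  rw [P0_eq_ker_weightZeroRG]
  exact RingHom.ker_isPrime _

lemma tIdeal_le_P0 : tIdeal K G ≤ P0 K G :=
  Ideal.span_le.mpr fun _ hu => Ideal.subset_span (Or.inl hu)

open Finset in
lemma vGen_mem_of_odd_loop {Q : Ideal (RG K G)} (hQ : Q.IsPrime)
    (htQ : ⟨tGen K, tGen_mem_RG⟩ ∈ Q) (hQP : Q ≤ P0 K G) {i : V} (p : G.Walk i i)
    (hp : Odd p.length) : ⟨vGen K i, vGen_mem_RG i⟩ ∈ Q := by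
  obtain ⟨k, hk⟩ := hp
  have hadj : ∀ l < 2 * k + 1, G.Adj (p.getVert l) (p.getVert (l + 1)) :=
    fun l hl => p.adj_getVert_succ (hk ▸ hl)
  have hloop : ∏ l ∈ range (2 * k + 1), eGen K (p.getVert l) (p.getVert (l + 1)) ∈ RG K G :=
    Subalgebra.prod_mem _ fun l hl => eGen_mem_RG (hadj l (mem_range.mp hl))
  have heven : ∏ j ∈ range (k + 1), eGen K (p.getVert (2 * j)) (p.getVert (2 * j + 1)) ∈
      RG K G :=
    Subalgebra.prod_mem _ fun j hj => eGen_mem_RG (hadj _ (by have := mem_range.mp hj; omega))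
  have hfactor : ⟨_, hloop⟩ * ⟨vGen K i, vGen_mem_RG i⟩ ^ 2 =
      (⟨tGen K, tGen_mem_RG⟩ : RG K G) * ⟨_, heven⟩ ^ 2 := Subtype.ext <| by
    simpa [eGen, vGen, tGen] using prod_range_odd_cycle_mul_sq (fun l => X (some (p.getVert l)))
      (X none : Amb K V) k (by rw [← hk, p.getVert_length, p.getVert_zero])
  have hloop_notMem : ⟨_, hloop⟩ ∉ P0 K G := by
    have hweight : (∏ l ∈ range (2 * k + 1), eGen K (p.getVert l) (p.getVert (l + 1))
        ).IsWeightedHomogeneous (tWeight V) 0 := by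
      simpa using IsWeightedHomogeneous.prod _ _ (fun _ => 0)
        fun l _ => isWeightedHomogeneous_eGen (K := K) (p.getVert l) (p.getVert (l + 1))
    rw [P0_eq_ker_weightZeroRG, RingHom.mem_ker, weightZeroRG_apply,
      hweight.weightedHomogeneousComponent_same]
    exact prod_ne_zero_iff.mpr fun l _ => by simp [eGen, X_ne_zero]
  rcases hQ.mem_or_mem (hfactor ▸ Q.mul_mem_right _ htQ) with hloopQ | hvQ
  · exact absurd (hQP hloopQ) hloop_notMem
  · exact hQ.mem_of_pow_mem 2 hvQ

lemma P0_le_of_generators_mem {Q : Ideal (RG K G)} (htQ : ⟨tGen K, tGen_mem_RG⟩ ∈ Q)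
    (hvQ : ∀ i, ⟨vGen K i, vGen_mem_RG i⟩ ∈ Q) : P0 K G ≤ Q := by
  refine Ideal.span_le.mpr ?_
  rintro u (hu | ⟨i, hu⟩)
  · exact (Subtype.ext hu : u = ⟨_, tGen_mem_RG⟩) ▸ htQ
  · exact (Subtype.ext hu : u = ⟨_, vGen_mem_RG i⟩) ▸ hvQ i

end ToricRing


/-- If `G` is connected and `P₀ = (t, x₁t, …, xₙt)` is not a minimal
prime of the principal ideal `(t)` of `R_G`, then `G` is bipartite. -/
theorem stmt5 (K : Type*) [Field K] {n : ℕ} (G : SimpleGraph (Fin n))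
    (hconn : G.Connected)
    (h : P0 K G ∉ (tIdeal K G).minimalPrimes) :
    G.Colorable 2 := by
  by_contra hnc
  refine h ⟨⟨P0_isPrime, tIdeal_le_P0⟩, fun Q ⟨hQ, htQ⟩ hQP => ?_⟩
  have ht : ⟨tGen K, tGen_mem_RG⟩ ∈ Q := htQ (Ideal.subset_span rfl)
  refine P0_le_of_generators_mem ht fun i => ?_
  obtain ⟨p, hp⟩ := hconn.exists_odd_loop hnc i
  exact vGen_mem_of_odd_loop hQ ht hQP p hp
end
end

section
/- The cycle graph $C_k$ on $k\ge 3$ vertices is unmixed (all minimal vertex covers have equal cardinality) if and only if $k \in \{3,4,5,7\}$. -/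
/-- The cycle graph `C_k` on `ZMod k`. -/
def cycleG (k : ℕ) : SimpleGraph (ZMod k) where
  Adj i j := i ≠ j ∧ (j = i + 1 ∨ i = j + 1)
  symm := by constructor; rintro i j ⟨h1, h2⟩; exact ⟨h1.symm, h2.symm⟩
  loopless := by constructor; rintro i ⟨h1, _⟩; exact h1 rfl

/-- A vertex cover of a graph on `ZMod k`. -/
def IsVCov {k : ℕ} (G : SimpleGraph (ZMod k)) (C : Finset (ZMod k)) : Prop :=
  ∀ ⦃i j⦄, G.Adj i j → i ∈ C ∨ j ∈ C

/-- A minimal vertex cover. -/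
def IsMinVCov {k : ℕ} (G : SimpleGraph (ZMod k)) (C : Finset (ZMod k)) : Prop :=
  IsVCov G C ∧ ∀ C' ⊆ C, IsVCov G C' → C' = C

/-!
A vertex cover is minimal iff each of its vertices has a neighbour outside it; on a cycle this
says the cover contains no three consecutive vertices. For `k ∈ {3, 4, 5, 7}` a finite check
shows all such covers have the same size. For `k = 6` and `k ≥ 8` the odd vertices (together
with `k - 1`) form a minimal cover, and replacing `3` by `2` and `4` gives a minimal cover with
one more vertex.
-/

open Finset

def IsUnmixed {k : ℕ} (G : SimpleGraph (ZMod k)) : Prop :=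
  ∀ C₁ C₂ : Finset (ZMod k), IsMinVCov G C₁ → IsMinVCov G C₂ → C₁.card = C₂.card

section MinimalCover

variable {k : ℕ} {G : SimpleGraph (ZMod k)} {C : Finset (ZMod k)}

theorem isMinVCov_iff_forall_exists_adj_notMem :
    IsMinVCov G C ↔ IsVCov G C ∧ ∀ v ∈ C, ∃ w, G.Adj v w ∧ w ∉ C := by
  refine ⟨fun ⟨hC, hmin⟩ => ⟨hC, fun v hv => ?_⟩, fun ⟨hC, hout⟩ => ⟨hC, fun C' hC'C hC' => ?_⟩⟩
  · by_contra! hnbrs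
    have hcov : IsVCov G (C.erase v) := by
      intro i j hij
      rcases eq_or_ne i v with rfl | hi
      · exact Or.inr (mem_erase.2 ⟨hij.ne.symm, hnbrs j hij⟩)
      rcases eq_or_ne j v with rfl | hj
      · exact Or.inl (mem_erase.2 ⟨hi, hnbrs i hij.symm⟩)
      exact (hC hij).imp (fun h => mem_erase.2 ⟨hi, h⟩) (fun h => mem_erase.2 ⟨hj, h⟩)
    exact notMem_erase v C (by rwa [hmin _ (erase_subset v C) hcov])
  · refine hC'C.antisymm fun v hv => ?_
    obtain ⟨w, hvw, hw⟩ := hout v hv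
    exact (hC' hvw).resolve_right fun h => hw (hC'C h)

end MinimalCover

section Cycle

variable {k : ℕ} [Fact (1 < k)] {C : Finset (ZMod k)}

theorem cycleG_adj_iff {v w : ZMod k} : (cycleG k).Adj v w ↔ w = v + 1 ∨ w = v - 1 := by
  refine ⟨fun ⟨_, h⟩ => h.imp id fun h => by rw [h]; ring, fun h => ⟨?_, ?_⟩⟩
  · rcases h with rfl | rfl
    · simp
    · simp [eq_sub_iff_add_eq]
  · exact h.imp id fun h => by rw [h]; ring

theorem isVCov_cycleG_iff : IsVCov (cycleG k) C ↔ ∀ v, v ∈ C ∨ v + 1 ∈ C := by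
  refine ⟨fun hC v => hC (cycleG_adj_iff.2 (Or.inl rfl)), fun hC v w hvw => ?_⟩
  rcases cycleG_adj_iff.1 hvw with rfl | rfl
  · exact hC v
  · simpa [or_comm] using hC (v - 1)

theorem isMinVCov_cycleG_iff :
    IsMinVCov (cycleG k) C ↔
      ∀ v, (v ∈ C ∨ v + 1 ∈ C) ∧ ¬(v ∈ C ∧ v + 1 ∈ C ∧ v + 1 + 1 ∈ C) := by
  simp only [isMinVCov_iff_forall_exists_adj_notMem, isVCov_cycleG_iff, cycleG_adj_iff,
    forall_and]
  refine and_congr_right fun _ => ⟨fun h v ⟨hv, hv1, hv2⟩ => ?_, fun h v hv => ?_⟩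
  · obtain ⟨w, rfl | rfl, hw⟩ := h (v + 1) hv1
    · exact hw hv2
    · exact hw (by simpa using hv)
  · by_contra! hnbrs
    exact h (v - 1) ⟨hnbrs _ (Or.inr rfl), by simpa using hv, by simpa using hnbrs _ (Or.inl rfl)⟩

theorem isUnmixed_cycleG_of_forall_card_eq (c : ℕ)
    (h : ∀ C : Finset (ZMod k),
      (∀ v, (v ∈ C ∨ v + 1 ∈ C) ∧ ¬(v ∈ C ∧ v + 1 ∈ C ∧ v + 1 + 1 ∈ C)) → C.card = c) :
    IsUnmixed (cycleG k) := fun _ _ h₁ h₂ =>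
  (h _ (isMinVCov_cycleG_iff.1 h₁)).trans (h _ (isMinVCov_cycleG_iff.1 h₂)).symm

end Cycle

section Val

variable {k : ℕ}

def succMod (k a : ℕ) : ℕ := if a + 1 = k then 0 else a + 1

theorem ZMod.val_add_one_eq_succMod [Fact (1 < k)] (x : ZMod k) :
    (x + 1).val = succMod k x.val := by
  rw [ZMod.val_add, ZMod.val_one, succMod]
  split_ifs with h
  · rw [h, Nat.mod_self]
  · exact Nat.mod_eq_of_lt (by have := x.val_lt; omega)

theorem card_filter_val [NeZero k] (P : ℕ → Prop) [DecidablePred P] :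
    (univ.filter fun x : ZMod k => P x.val).card = ((range k).filter P).card := by
  refine card_nbij ZMod.val (fun x _ => ?_) (fun x _ y _ h => ZMod.val_injective k h)
    fun a ha => ?_
  · simp_all [ZMod.val_lt]
  · simp only [coe_filter, mem_range, Set.mem_ofPred_eq] at ha
    exact ⟨a, by simp [ZMod.val_cast_of_lt ha.1, ha.2], ZMod.val_cast_of_lt ha.1⟩

theorem isMinVCov_cycleG_filter_val [Fact (1 < k)] (P : ℕ → Prop) [DecidablePred P]
    (h : ∀ a < k, (P a ∨ P (succMod k a)) ∧
      ¬(P a ∧ P (succMod k a) ∧ P (succMod k (succMod k a)))) :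
    IsMinVCov (cycleG k) (univ.filter fun x : ZMod k => P x.val) := by
  rw [isMinVCov_cycleG_iff]
  intro v
  simpa only [mem_filter, mem_univ, true_and, ZMod.val_add_one_eq_succMod] using h v.val v.val_lt

end Val

def InSmallCycleCover (k a : ℕ) : Prop := a % 2 = 1 ∨ a = k - 1

instance (k : ℕ) : DecidablePred (InSmallCycleCover k) :=
  fun a => inferInstanceAs (Decidable (a % 2 = 1 ∨ a = k - 1))

-- For `k = 7` this is not a minimal cover: `5` has both neighbours `4` and `6 = k - 1` in it.
def InLargeCycleCover (k a : ℕ) : Prop := a = 2 ∨ a = 4 ∨ (a % 2 = 1 ∧ a ≠ 3) ∨ a = k - 1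

instance (k : ℕ) : DecidablePred (InLargeCycleCover k) :=
  fun a => inferInstanceAs (Decidable (a = 2 ∨ a = 4 ∨ (a % 2 = 1 ∧ a ≠ 3) ∨ a = k - 1))

theorem isMinVCov_smallCycleCover {k : ℕ} [Fact (1 < k)] :
    IsMinVCov (cycleG k) (univ.filter fun x : ZMod k => InSmallCycleCover k x.val) := by
  refine isMinVCov_cycleG_filter_val (InSmallCycleCover k) fun a ha => ?_
  have := (Fact.out : 1 < k)
  unfold InSmallCycleCover succMod
  split <;> split <;> omega

theorem isMinVCov_largeCycleCover {k : ℕ} [Fact (1 < k)] (hk : k = 6 ∨ 8 ≤ k) :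
    IsMinVCov (cycleG k) (univ.filter fun x : ZMod k => InLargeCycleCover k x.val) := by
  refine isMinVCov_cycleG_filter_val (InLargeCycleCover k) fun a ha => ?_
  unfold InLargeCycleCover succMod
  split <;> split <;> omega

theorem card_largeCycleCover {k : ℕ} (hk : 6 ≤ k) :
    ((range k).filter (InLargeCycleCover k)).card =
      ((range k).filter (InSmallCycleCover k)).card + 1 := by
  have hswap : insert 3 ((range k).filter (InLargeCycleCover k)) =
      insert 2 (insert 4 ((range k).filter (InSmallCycleCover k))) := by
    ext a
    simp only [mem_insert, mem_filter, mem_range, InLargeCycleCover, InSmallCycleCover]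
    omega
  have := congrArg card hswap
  rw [card_insert_of_notMem (by simp [InLargeCycleCover]; omega),
    card_insert_of_notMem (by simp [InSmallCycleCover]; omega),
    card_insert_of_notMem (by simp [InSmallCycleCover]; omega)] at this
  omega

set_option maxRecDepth 10000 in
/-- The cycle `C_k`, `k ≥ 3`, is unmixed (all minimal vertex covers
have the same cardinality) if and only if `k ∈ {3, 4, 5, 7}`. -/
theorem stmt12 (k : ℕ) (hk : 3 ≤ k) :
    (∀ C₁ C₂ : Finset (ZMod k), IsMinVCov (cycleG k) C₁ → IsMinVCov (cycleG k) C₂ →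
        C₁.card = C₂.card) ↔
      (k = 3 ∨ k = 4 ∨ k = 5 ∨ k = 7) := by
  have : Fact (1 < k) := ⟨by omega⟩
  refine ⟨fun h => ?_, ?_⟩
  · by_contra hk'
    have hcard := h _ _ isMinVCov_smallCycleCover (isMinVCov_largeCycleCover (by omega))
    rw [card_filter_val, card_filter_val, card_largeCycleCover (by omega)] at hcard
    omega
  · rintro (rfl | rfl | rfl | rfl)
    exacts [isUnmixed_cycleG_of_forall_card_eq 2 (by decide),
      isUnmixed_cycleG_of_forall_card_eq 2 (by decide),
      isUnmixed_cycleG_of_forall_card_eq 3 (by decide),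
      isUnmixed_cycleG_of_forall_card_eq 4 (by decide)]
end
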